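/- Let λ₁ ≥ λ₂ ≥ λ₃ ≥ λ₄ ≥ 0 with λ₁ = λ₃ + 2√(λ₂λ₄) (boundary condition). If μ ∈ ℝ⁴ with μ₁ ≥ μ₂ ≥ μ₃ ≥ μ₄ ≥ 0, μ ≻ λ, and μ ≠ λ, then μ₁ > μ₃ + 2√(μ₂μ₄). -/
import Mathlib

/-- The sum of the `k` largest entries of `u`. -/
noncomputable def maxSum {n : ℕ} (u : Fin n → ℝ) (k : ℕ) : ℝ :=
  sSup {s : ℝ | ∃ A : Finset (Fin n), A.card = k ∧ ∑ i ∈ A, u i = s}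

/-- `Majorizes v u` means `u ≺ v`. -/
def Majorizes {n : ℕ} (v u : Fin n → ℝ) : Prop :=
  (∀ k : ℕ, maxSum u k ≤ maxSum v k) ∧ ∑ i, u i = ∑ i, v i

lemma maxSumSet_bddAbove {n : ℕ} (u : Fin n → ℝ) (k : ℕ) :
    BddAbove {s : ℝ | ∃ A : Finset (Fin n), A.card = k ∧ ∑ i ∈ A, u i = s} := by
  have h : {s : ℝ | ∃ A : Finset (Fin n), A.card = k ∧ ∑ i ∈ A, u i = s}
      = (fun A : Finset (Fin n) => ∑ i ∈ A, u i) '' {A | A.card = k} := by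
    ext s
    simp only [Set.mem_setOf_eq, Set.mem_image]
  rw [h]
  exact ((Set.toFinite _).image _).bddAbove

lemma le_maxSum {n : ℕ} (u : Fin n → ℝ) (A : Finset (Fin n)) :
    ∑ i ∈ A, u i ≤ maxSum u A.card :=
  le_csSup (maxSumSet_bddAbove u A.card) ⟨A, rfl, rfl⟩

lemma maxSum_le {n : ℕ} (u : Fin n → ℝ) (k : ℕ) (A₀ : Finset (Fin n)) (h₀ : A₀.card = k)
    (M : ℝ) (hub : ∀ A : Finset (Fin n), A.card = k → ∑ i ∈ A, u i ≤ M) :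
    maxSum u k ≤ M := by
  refine csSup_le ⟨∑ i ∈ A₀, u i, ⟨A₀, h₀, rfl⟩⟩ ?_
  rintro s ⟨A, hA, rfl⟩
  exact hub A hA

set_option maxHeartbeats 1000000 in
/-- If `λ₁ ≥ λ₂ ≥ λ₃ ≥ λ₄ ≥ 0` satisfies the boundary condition
`λ₁ = λ₃ + 2√(λ₂λ₄)` and `μ` is sorted non-increasingly with `μ ≻ λ` and `μ ≠ λ`,
then `μ₁ > μ₃ + 2√(μ₂μ₄)`. -/
theorem majorizing_boundary_point_violates_AS (l μ : Fin 4 → ℝ)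
    (hl : l 0 ≥ l 1 ∧ l 1 ≥ l 2 ∧ l 2 ≥ l 3 ∧ l 3 ≥ 0)
    (hbound : l 0 = l 2 + 2 * Real.sqrt (l 1 * l 3))
    (hμ : μ 0 ≥ μ 1 ∧ μ 1 ≥ μ 2 ∧ μ 2 ≥ μ 3 ∧ μ 3 ≥ 0)
    (hmaj : Majorizes μ l) (hne : μ ≠ l) :
    μ 0 > μ 2 + 2 * Real.sqrt (μ 1 * μ 3) := by
  obtain ⟨hl01, hl12, hl23, hl3⟩ := hl
  obtain ⟨hm01, hm12, hm23, hm3⟩ := hμ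
  obtain ⟨hM, hS⟩ := hmaj
  have hsum : μ 0 + μ 1 + μ 2 + μ 3 = l 0 + l 1 + l 2 + l 3 := by
    have h := hS
    rw [Fin.sum_univ_four, Fin.sum_univ_four] at h
    linarith
  -- partial sum inequalities
  have h1 : l 0 ≤ μ 0 := by
    have hlo : l 0 ≤ maxSum l 1 := by
      have := le_maxSum l {0}
      simpa using this
    have hup : maxSum μ 1 ≤ μ 0 := by
      refine maxSum_le μ 1 {0} (by simp) (μ 0) ?_
      intro A hA
      obtain ⟨i, rfl⟩ := Finset.card_eq_one.mp hA
      rw [Finset.sum_singleton]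
      fin_cases i <;> simp <;> linarith
    linarith [hM 1]
  have h2 : l 0 + l 1 ≤ μ 0 + μ 1 := by
    have hlo : l 0 + l 1 ≤ maxSum l 2 := by
      have := le_maxSum l {0, 1}
      rw [Finset.sum_pair (by decide)] at this
      simpa using this
    have hup : maxSum μ 2 ≤ μ 0 + μ 1 := by
      refine maxSum_le μ 2 {0, 1} (by decide) (μ 0 + μ 1) ?_
      intro A hA
      obtain ⟨i, j, hij, rfl⟩ := Finset.card_eq_two.mp hA
      rw [Finset.sum_pair hij]
      fin_cases i <;> fin_cases j <;> simp_all <;> linarith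
    linarith [hM 2]
  have h3 : l 0 + l 1 + l 2 ≤ μ 0 + μ 1 + μ 2 := by
    have hlo : l 0 + (l 1 + l 2) ≤ maxSum l 3 := by
      have := le_maxSum l {0, 1, 2}
      rw [show ({0, 1, 2} : Finset (Fin 4)) = insert 0 {1, 2} from rfl,
        Finset.sum_insert (by decide), Finset.sum_pair (by decide)] at this
      simpa using this
    have hup : maxSum μ 3 ≤ μ 0 + μ 1 + μ 2 := by
      refine maxSum_le μ 3 {0, 1, 2} (by decide) (μ 0 + μ 1 + μ 2) ?_
      intro A hA
      have hc : Aᶜ.card = 1 := by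
        rw [Finset.card_compl, hA]
        rfl
      obtain ⟨i, hi⟩ := Finset.card_eq_one.mp hc
      have hAe : A = ({i} : Finset (Fin 4))ᶜ := by
        rw [← hi, compl_compl]
      have hsc : ∑ x ∈ ({i} : Finset (Fin 4)), μ x + ∑ x ∈ ({i} : Finset (Fin 4))ᶜ, μ x
          = ∑ x, μ x := Finset.sum_add_sum_compl _ _
      rw [Finset.sum_singleton, Fin.sum_univ_four] at hsc
      rw [hAe]
      have : μ 3 ≤ μ i := by fin_cases i <;> simp <;> linarith
      linarith
    linarith [hM 3]
  have hd : μ 3 ≤ l 3 := by linarith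
  obtain ⟨G, hGdef⟩ : ∃ G, G = Real.sqrt (l 1 * l 3) := ⟨_, rfl⟩
  have hbound2 : l 0 = l 2 + 2 * G := by rw [hGdef]; exact hbound
  have hG0 : 0 ≤ G := by rw [hGdef]; exact Real.sqrt_nonneg _
  have hl1n : 0 ≤ l 1 := by linarith
  have hm1n : 0 ≤ μ 1 := by linarith
  have hm13n : 0 ≤ μ 1 * μ 3 := mul_nonneg hm1n hm3
  have hG2 : G * G = l 1 * l 3 := by rw [hGdef]; exact Real.mul_self_sqrt (mul_nonneg hl1n hl3)
  by_cases hs : l 3 = 0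
  · -- degenerate case: l = (p,p,p,0)
    have hGz : G = 0 := by rw [hGdef, hs, mul_zero, Real.sqrt_zero]
    have hpr : l 0 = l 2 := by rw [hbound2, hGz]; ring
    have hd0 : μ 3 = 0 := le_antisymm (hs ▸ hd) hm3
    have hsq : Real.sqrt (μ 1 * μ 3) = 0 := by rw [hd0, mul_zero, Real.sqrt_zero]
    rw [hsq]
    by_contra hcon
    push_neg at hcon
    have e0 : μ 0 = μ 2 := by linarith
    have e1 : μ 0 = l 0 := by linarith
    exact hne (by
      funext i
      fin_cases i
      · exact e1
      · show μ 1 = l 1; linarith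
      · show μ 2 = l 2; linarith
      · show μ 3 = l 3; linarith)
  · have hs' : 0 < l 3 := lt_of_le_of_ne hl3 (Ne.symm hs)
    by_cases hqs : l 1 = l 3
    · -- l = (3s, s, s, s)
      have hGl : G = l 3 := by rw [hGdef, hqs, Real.sqrt_mul_self hl3]
      have hp3 : l 0 = 3 * l 3 := by
        rw [hbound2, hGl]; linarith
      have hsqm : Real.sqrt (μ 1 * μ 3) = Real.sqrt (μ 1) * Real.sqrt (μ 3) :=
        Real.sqrt_mul hm1n _
      have hb2 : Real.sqrt (μ 1) * Real.sqrt (μ 1) = μ 1 := Real.mul_self_sqrt hm1n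
      have hd2 : Real.sqrt (μ 3) * Real.sqrt (μ 3) = μ 3 := Real.mul_self_sqrt hm3
      have expand : (Real.sqrt (μ 1) - Real.sqrt (μ 3)) ^ 2
          = μ 1 + μ 3 - 2 * (Real.sqrt (μ 1) * Real.sqrt (μ 3)) := by
        rw [sub_sq, Real.sq_sqrt hm1n, Real.sq_sqrt hm3]; ring
      have hamgm : 2 * Real.sqrt (μ 1 * μ 3) ≤ μ 1 + μ 3 := by
        rw [hsqm]; linarith [sq_nonneg (Real.sqrt (μ 1) - Real.sqrt (μ 3)), expand]
      by_cases hA0 : l 0 < μ 0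
      · linarith
      · have ha : μ 0 = l 0 := le_antisymm (not_lt.mp hA0) h1
        by_cases hbd : μ 1 = μ 3
        · exfalso
          apply hne
          have e1 : μ 1 = l 1 := by linarith
          funext i
          fin_cases i
          · exact ha
          · exact e1
          · show μ 2 = l 2; linarith
          · show μ 3 = l 3; linarith
        · have hner : Real.sqrt (μ 1) ≠ Real.sqrt (μ 3) := by
            intro h
            exact hbd (by rw [← hb2, ← hd2, h])
          have hpos : 0 < (Real.sqrt (μ 1) - Real.sqrt (μ 3)) ^ 2 :=
            lt_of_le_of_ne (sq_nonneg _)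
              (Ne.symm (pow_ne_zero 2 (sub_ne_zero_of_ne hner)))
          have hstrict : 2 * Real.sqrt (μ 1 * μ 3) < μ 1 + μ 3 := by
            rw [hsqm]; linarith [hpos, expand]
          linarith
    · -- generic case: l 1 > l 3 > 0
      have hqs' : l 3 < l 1 := lt_of_le_of_ne (by linarith) (Ne.symm hqs)
      have hGq : G < l 1 := by
        rw [hGdef]
        have h' : Real.sqrt (l 1 * l 3) < Real.sqrt (l 1 * l 1) :=
          Real.sqrt_lt_sqrt (mul_nonneg hl1n hl3) (by nlinarith)
        rwa [Real.sqrt_mul_self hl1n] at h'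
      have hGs : l 3 < G := by
        rw [hGdef]
        have h' : Real.sqrt (l 3 * l 3) < Real.sqrt (l 1 * l 3) :=
          Real.sqrt_lt_sqrt (mul_nonneg hl3 hl3) (by nlinarith)
        rwa [Real.sqrt_mul_self hl3] at h'
      have hGpos : 0 < G := lt_trans hs' hGs
      -- key AM-GM inequality : 2√(μ1 μ3) G ≤ μ1 l3 + μ3 l1
      have hsplit : Real.sqrt (μ 1 * μ 3) * G
          = Real.sqrt (μ 1 * l 3) * Real.sqrt (μ 3 * l 1) := by
        rw [hGdef, ← Real.sqrt_mul hm13n,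
          show μ 1 * μ 3 * (l 1 * l 3) = (μ 1 * l 3) * (μ 3 * l 1) by ring,
          Real.sqrt_mul (mul_nonneg hm1n hl3)]
      have hx2 : Real.sqrt (μ 1 * l 3) * Real.sqrt (μ 1 * l 3) = μ 1 * l 3 :=
        Real.mul_self_sqrt (mul_nonneg hm1n hl3)
      have hy2 : Real.sqrt (μ 3 * l 1) * Real.sqrt (μ 3 * l 1) = μ 3 * l 1 :=
        Real.mul_self_sqrt (mul_nonneg hm3 hl1n)
      have hK : 2 * Real.sqrt (μ 1 * μ 3) * G ≤ μ 1 * l 3 + μ 3 * l 1 := by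
        nlinarith [sq_nonneg (Real.sqrt (μ 1 * l 3) - Real.sqrt (μ 3 * l 1))]
      -- key identity
      have key : G * (μ 0 - μ 2) - (μ 1 * l 3 + μ 3 * l 1)
          = (μ 0 - l 0) * (G + l 3) + ((μ 0 - l 0) + (μ 1 - l 1)) * (G - l 3)
            + (l 3 - μ 3) * (l 1 - G) := by
        linear_combination (-G) * hsum + G * hbound2 + 2 * hG2
      have hP1 : 0 ≤ (μ 0 - l 0) * (G + l 3) :=
        mul_nonneg (by linarith) (by linarith)
      have hP2 : 0 ≤ ((μ 0 - l 0) + (μ 1 - l 1)) * (G - l 3) :=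
        mul_nonneg (by linarith) (by linarith)
      have hP3 : 0 ≤ (l 3 - μ 3) * (l 1 - G) :=
        mul_nonneg (by linarith) (by linarith)
      have hT : μ 1 * l 3 + μ 3 * l 1 < G * (μ 0 - μ 2) := by
        by_cases ea : l 0 < μ 0
        · have : 0 < (μ 0 - l 0) * (G + l 3) :=
            mul_pos (by linarith) (by linarith)
          linarith
        · by_cases eb : l 1 < μ 1
          · have : 0 < ((μ 0 - l 0) + (μ 1 - l 1)) * (G - l 3) :=
              mul_pos (by linarith) (by linarith)
            linarith
          · by_cases ed : μ 3 < l 3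
            · have : 0 < (l 3 - μ 3) * (l 1 - G) :=
                mul_pos (by linarith) (by linarith)
              linarith
            · exfalso
              apply hne
              have e0 : μ 0 = l 0 := le_antisymm (not_lt.mp ea) h1
              have e3 : μ 3 = l 3 := le_antisymm hd (not_lt.mp ed)
              have e1 : μ 1 = l 1 := le_antisymm (not_lt.mp eb) (by linarith)
              funext i
              fin_cases i
              · exact e0
              · exact e1
              · show μ 2 = l 2; linarith
              · exact e3
      have hfin : 2 * Real.sqrt (μ 1 * μ 3) * G < (μ 0 - μ 2) * G := by
        nlinarith
      have := lt_of_mul_lt_mul_right hfin hG0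
      linarith
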